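/- Combining the previous results: under the uniform score bound ‖∇_θ log p_θ(y)‖_∞ ≤ G for all y ∈ S, the gradient of the unnormalized log-likelihood approximates the gradient of the normalized log-likelihood with error at most 2G(1 − Z(θ)) in sup-norm: ‖∇_θ L'(θ) − ∇_θ L(θ)‖_∞ ≤ 2G(1 − Z(θ)). -/

import Mathlib

/-!
Since `log (p ystar / Z) = log p ystar - log Z`, the difference of the two gradients is
`∇ log Z = (∑_{y ∈ V} ∇p_θ(y)) / Z`. The score bound gives `|∂ᵢ p_θ(y)| ≤ G p_θ(y)`, so the
numerator is at most `G Z`; since `∑_y ∇p_θ(y) = ∇1 = 0`, it also equals minus the sum over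
the complement of `V`, hence is at most `G (1 - Z)`. Dividing by `Z` and splitting at
`Z = 1/2` gives the bound `2G(1 - Z)`.
-/

open Finset

section Calculus

variable {E : Type*} [NormedAddCommGroup E] [NormedSpace ℝ E]

lemma fderiv_log_apply {f : E → ℝ} {x : E} (hf : DifferentiableAt ℝ f x) (hx : f x ≠ 0)
    (v : E) : fderiv ℝ (fun x => Real.log (f x)) x v = fderiv ℝ f x v / f x := by
  rw [fderiv.log hf hx, smul_apply, smul_eq_mul, inv_mul_eq_div]

lemma abs_fderiv_apply_le_mul_of_abs_fderiv_log_apply_le {f : E → ℝ} {x v : E} {G : ℝ}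
    (hf : DifferentiableAt ℝ f x) (hx : 0 < f x)
    (hG : |fderiv ℝ (fun x => Real.log (f x)) x v| ≤ G) :
    |fderiv ℝ f x v| ≤ G * f x := by
  rw [fderiv_log_apply hf hx.ne', abs_div, abs_of_pos hx, div_le_iff₀ hx] at hG
  exact hG

lemma fderiv_log_sub_fderiv_log_div {f g : E → ℝ} {x : E}
    (hf : DifferentiableAt ℝ f x) (hg : DifferentiableAt ℝ g x)
    (hf0 : ∀ y, f y ≠ 0) (hg0 : ∀ y, g y ≠ 0) :
    fderiv ℝ (fun x => Real.log (f x)) x - fderiv ℝ (fun x => Real.log (f x / g x)) x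
      = fderiv ℝ (fun x => Real.log (g x)) x := by
  have hlog_div : (fun x => Real.log (f x / g x))
      = fun x => Real.log (f x) - Real.log (g x) :=
    funext fun y => Real.log_div (hf0 y) (hg0 y)
  rw [hlog_div, fderiv_fun_sub (hf.log (hf0 x)) (hg.log (hg0 x)), sub_sub_cancel]

lemma sum_fderiv_apply_eq_zero_of_sum_eq_const {ι : Type*} [Fintype ι] {p : E → ι → ℝ} {c : ℝ}
    {x : E} (hsum : ∀ x, ∑ y, p x y = c) (hdiff : ∀ y, DifferentiableAt ℝ (fun x => p x y) x)
    (v : E) : ∑ y, fderiv ℝ (fun x => p x y) x v = 0 := by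
  have hconst : (fun x => ∑ y, p x y) = fun _ => c := funext hsum
  rw [← _root_.sum_apply, ← fderiv_fun_sum fun y _ => hdiff y, hconst,
    fderiv_const_apply, zero_apply]

end Calculus

section FiniteSums

variable {ι : Type*} {F q : ι → ℝ} {G : ℝ}

lemma abs_sum_le_mul_sum_of_abs_le {s : Finset ι} (hF : ∀ y ∈ s, |F y| ≤ G * q y) :
    |∑ y ∈ s, F y| ≤ G * ∑ y ∈ s, q y :=
  calc |∑ y ∈ s, F y| ≤ ∑ y ∈ s, |F y| := abs_sum_le_sum_abs _ _
    _ ≤ ∑ y ∈ s, G * q y := sum_le_sum hF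
    _ = G * ∑ y ∈ s, q y := (mul_sum _ _ _).symm

lemma abs_sum_le_mul_one_sub_sum [Fintype ι] [DecidableEq ι] (hF0 : ∑ y, F y = 0)
    (hq1 : ∑ y, q y = 1) (hF : ∀ y, |F y| ≤ G * q y) (s : Finset ι) :
    |∑ y ∈ s, F y| ≤ G * (1 - ∑ y ∈ s, q y) := by
  have hF_compl : ∑ y ∈ s, F y = -∑ y ∈ sᶜ, F y := by
    linarith [sum_add_sum_compl s F]
  have hq_compl : ∑ y ∈ sᶜ, q y = 1 - ∑ y ∈ s, q y := by
    linarith [sum_add_sum_compl s q]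
  rw [hF_compl, abs_neg, ← hq_compl]
  exact abs_sum_le_mul_sum_of_abs_le fun y _ => hF y

end FiniteSums

lemma abs_div_le_two_mul_one_sub {s G Z : ℝ} (hZ : 0 < Z) (hs : |s| ≤ G * Z)
    (hs' : |s| ≤ G * (1 - Z)) : |s / Z| ≤ 2 * G * (1 - Z) := by
  have hG : 0 ≤ G := nonneg_of_mul_nonneg_left ((abs_nonneg s).trans hs) hZ
  rw [abs_div, abs_of_pos hZ, div_le_iff₀ hZ]
  rcases le_total Z (1 / 2) with hZ_half | hZ_half
  · nlinarith
  · nlinarith [abs_nonneg s]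

theorem stmt_11_general {S : Type*} [Fintype S] {d : ℕ}
    (p : (Fin d → ℝ) → S → ℝ)
    (hpos : ∀ θ y, 0 < p θ y) (hsum : ∀ θ, ∑ y, p θ y = 1)
    (hdiff : ∀ θ y, DifferentiableAt ℝ (fun θ' => p θ' y) θ)
    (V : Finset S) (hZpos : ∀ θ, 0 < ∑ y ∈ V, p θ y)
    (ystar : S) (θ : Fin d → ℝ)
    (G : ℝ)
    (hG : ∀ y i, |fderiv ℝ (fun θ' => Real.log (p θ' y)) θ (Pi.single i 1)| ≤ G) :
    ∀ i, |fderiv ℝ (fun θ' => Real.log (p θ' ystar)) θ (Pi.single i 1)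
          - fderiv ℝ (fun θ' => Real.log (p θ' ystar / ∑ y ∈ V, p θ' y)) θ (Pi.single i 1)|
      ≤ 2 * G * (1 - ∑ y ∈ V, p θ y) := by
  classical
  intro i
  have hZ_diff : DifferentiableAt ℝ (fun θ' => ∑ y ∈ V, p θ' y) θ :=
    DifferentiableAt.fun_sum fun y _ => hdiff θ y
  have hscore : ∀ y, |fderiv ℝ (fun θ' => p θ' y) θ (Pi.single i 1)| ≤ G * p θ y := fun y =>
    abs_fderiv_apply_le_mul_of_abs_fderiv_log_apply_le (hdiff θ y) (hpos θ y) (hG y i)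
  rw [← sub_apply, fderiv_log_sub_fderiv_log_div (hdiff θ ystar) hZ_diff
      (fun θ' => (hpos θ' ystar).ne') (fun θ' => (hZpos θ').ne'),
    fderiv_log_apply hZ_diff (hZpos θ).ne', fderiv_fun_sum fun y _ => hdiff θ y,
    _root_.sum_apply]
  exact abs_div_le_two_mul_one_sub (hZpos θ) (abs_sum_le_mul_sum_of_abs_le fun y _ => hscore y)
    (abs_sum_le_mul_one_sub_sum
      (sum_fderiv_apply_eq_zero_of_sum_eq_const hsum (hdiff θ) _) (hsum θ) hscore V)

/-- Under a uniform sup-norm score bound `G`, the gradient of the unnormalized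
log-likelihood approximates the gradient of the normalized log-likelihood with
error at most `2G(1 - Z(θ))` in sup-norm (componentwise). -/
theorem stmt_11 {S : Type*} [Fintype S] {d : ℕ}
    (p : (Fin d → ℝ) → S → ℝ)
    (hpos : ∀ θ y, 0 < p θ y) (hsum : ∀ θ, ∑ y, p θ y = 1)
    (hdiff : ∀ θ y, DifferentiableAt ℝ (fun θ' => p θ' y) θ)
    (V : Finset S) (hZpos : ∀ θ, 0 < ∑ y ∈ V, p θ y)
    (ystar : S) (hy : ystar ∈ V) (θ : Fin d → ℝ)
    (G : ℝ)
    (hG : ∀ y i, |fderiv ℝ (fun θ' => Real.log (p θ' y)) θ (Pi.single i 1)| ≤ G) :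
    ∀ i, |fderiv ℝ (fun θ' => Real.log (p θ' ystar)) θ (Pi.single i 1)
          - fderiv ℝ (fun θ' => Real.log (p θ' ystar / ∑ y ∈ V, p θ' y)) θ (Pi.single i 1)|
      ≤ 2 * G * (1 - ∑ y ∈ V, p θ y) :=
  stmt_11_general p hpos hsum hdiff V hZpos ystar θ G hG
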